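/- arXiv:1102.0717 — 3 statements merged into one kernel-verified Lean document; each statement's English description precedes it below -/
import Mathlib

section
/- Let G(X) be the formal power series with G(X)^2 = G(X) + X and constant term 1. For every positive integer d and every integer k ≥ 0, the coefficient of X^k in G(X)^{2(d+k)} equals C(k+2d−1, 2d−1)·(d+k)/d. -/
/-!
Both `G` and `1 - G` are roots of `t² = t + X`, so `Lₙ = Gⁿ + (1 - G)ⁿ` satisfies the Lucas
recurrence `Lₙ₊₂ = Lₙ₊₁ + X Lₙ` with `L₀ = 2`, `L₁ = 1`. Reindexed by `n = m + k`, the coefficient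
of `X^k` in `Lₙ` obeys Pascal's rule; with the boundary values coming from `L₀ = 2`, `L₁ = 1` and
`deg Lₙ ≤ n / 2`, this gives `[X^(k+1)] L_(m+k+2) = C(m+1,k+1) + C(m,k)`.
Since `1 - G` has no constant term, `(1 - G)ⁿ` does not affect coefficients below `Xⁿ`, so these are
also the coefficients of `Gⁿ`. The theorem is the case `m = 2d + k - 1` of this formula.
-/

open PowerSeries

theorem pow_add_two_eq_of_sq_eq {R : Type*} [CommRing R] {x y : R} (h : y ^ 2 = y + x)
    (n : ℕ) : y ^ (n + 2) = y ^ (n + 1) + x * y ^ n := by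
  rw [pow_add, h]
  ring

theorem one_sub_sq_eq_of_sq_eq {R : Type*} [CommRing R] {x y : R} (h : y ^ 2 = y + x) :
    (1 - y) ^ 2 = (1 - y) + x := by
  linear_combination h

def lucas {R : Type*} [CommRing R] (y : R) (n : ℕ) : R := y ^ n + (1 - y) ^ n

section

variable {R : Type*} [CommRing R] {G : R⟦X⟧}

theorem lucas_add_two (hG : G ^ 2 = G + X) (n : ℕ) :
    lucas G (n + 2) = lucas G (n + 1) + X * lucas G n := by
  simp only [lucas, pow_add_two_eq_of_sq_eq hG, pow_add_two_eq_of_sq_eq (one_sub_sq_eq_of_sq_eq hG)]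
  ring

theorem coeff_lucas_eq_zero_of_lt (hG : G ^ 2 = G + X) :
    ∀ {n k : ℕ}, n < 2 * k → coeff k (lucas G n) = 0
  | 0, k, h => by simp [lucas, coeff_one, show k ≠ 0 by omega]
  | 1, k, h => by simp [lucas, coeff_one, show k ≠ 0 by omega]
  | n + 2, k + 1, h => by
    rw [lucas_add_two hG, map_add, coeff_succ_X_mul, coeff_lucas_eq_zero_of_lt hG (by omega),
      coeff_lucas_eq_zero_of_lt hG (by omega), add_zero]
  | n + 2, 0, h => by omega

theorem constantCoeff_lucas_succ (hG1 : constantCoeff G = 1) (n : ℕ) :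
    constantCoeff (lucas G (n + 1)) = 1 := by
  simp [lucas, hG1]

theorem coeff_succ_lucas (hG : G ^ 2 = G + X) (hG1 : constantCoeff G = 1) (m k : ℕ) :
    coeff (k + 1) (lucas G (m + k + 2)) = (m + 1).choose (k + 1) + m.choose k := by
  induction m generalizing k with
  | zero =>
    rw [lucas_add_two hG, map_add, coeff_succ_X_mul,
      coeff_lucas_eq_zero_of_lt hG (by omega), zero_add]
    cases k with
    | zero => simp [lucas]
    | succ j =>
      simp [coeff_lucas_eq_zero_of_lt hG (show j + 1 < 2 * (j + 1) by omega),
        Nat.choose_eq_zero_of_lt (show 1 < j + 2 by omega)]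
  | succ m ih =>
    rw [show m + 1 + k + 2 = m + k + 1 + 2 by ring, lucas_add_two hG, map_add, coeff_succ_X_mul,
      ih, Nat.choose_succ_succ (m + 1)]
    cases k with
    | zero =>
      simp [coeff_zero_eq_constantCoeff, constantCoeff_lucas_succ hG1]
      ring
    | succ j =>
      rw [show m + (j + 1) + 1 = m + j + 2 by ring, ih]
      push_cast [Nat.choose_succ_succ m j]
      ring

theorem coeff_pow_eq_coeff_lucas (hG1 : constantCoeff G = 1) {k n : ℕ} (h : k < n) :
    coeff k (G ^ n) = coeff k (lucas G n) := by
  have hX : X ∣ 1 - G := X_dvd_iff.mpr (by simp [hG1])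
  rw [lucas, map_add, X_pow_dvd_iff.mp (pow_dvd_pow_of_dvd hX n) k h, add_zero]

theorem coeff_succ_pow_of_sq_eq (hG : G ^ 2 = G + X) (hG1 : constantCoeff G = 1) (m k : ℕ) :
    coeff (k + 1) (G ^ (m + k + 2)) = (m + 1).choose (k + 1) + m.choose k := by
  rw [coeff_pow_eq_coeff_lucas hG1 (by omega), coeff_succ_lucas hG hG1]

end

theorem choose_succ_add_choose_mul (d j : ℕ) :
    ((2 * d + j + 1).choose (j + 1) + (2 * d + j).choose j) * d =
      (2 * d + j).choose (j + 1) * (d + (j + 1)) := by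
  have h := Nat.choose_succ_right_eq (2 * d + j) j
  rw [show 2 * d + j - j = 2 * d by omega] at h
  rw [Nat.choose_succ_succ]
  linarith

/-- For `G` the power series with `G² = G + X` and constant term `1`, every positive `d`
and every `k ≥ 0`, the coefficient of `X^k` in `G^(2(d+k))` is `C(k+2d−1,2d−1)·(d+k)/d`. -/
theorem stmt_2 (G : PowerSeries ℚ) (hG : G ^ 2 = G + PowerSeries.X)
    (hG1 : PowerSeries.constantCoeff G = 1) (d : ℕ) (hd : 0 < d) (k : ℕ) :
    PowerSeries.coeff k (G ^ (2 * (d + k))) =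
      ((k + 2 * d - 1).choose (2 * d - 1) : ℚ) * (d + k) / d := by
  have hd' : (d : ℚ) ≠ 0 := by positivity
  cases k with
  | zero => simp [coeff_zero_eq_constantCoeff, hG1, hd']
  | succ j =>
    rw [show 2 * (d + (j + 1)) = 2 * d + j + j + 2 by ring, coeff_succ_pow_of_sq_eq hG hG1,
      Nat.choose_symm_of_eq_add (show j + 1 + 2 * d - 1 = (2 * d - 1) + (j + 1) by omega),
      show j + 1 + 2 * d - 1 = 2 * d + j by omega, eq_div_iff hd']
    exact_mod_cast choose_succ_add_choose_mul d j
end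

section
/- Let G(X) be the formal power series with G(X)^2 = G(X) + X and constant term 1. For every integer k ≥ 1, the coefficient of X^k in G(X)^{2k} equals 2. -/
/-!
`G` and `1 - G` are the two roots of `t² = t + X`, so `Pₙ = Gⁿ + (1 - G)ⁿ` satisfies the Lucas
recurrence `Pₙ₊₂ = Pₙ₊₁ + X Pₙ` with `P₀ = 2`, `P₁ = 1`. Hence `Pₙ` is a polynomial of degree
at most `n / 2`, and the coefficient of `X^k` in `P₂ₖ` is `2`. Since `1 - G` has no constant
term, `(1 - G)^(2k)` does not contribute to the coefficient of `X^k` once `k ≥ 1`.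
-/

open PowerSeries

variable {R : Type*} [CommRing R]

lemma pow_add_two_of_sq_eq_add {x c : R} (h : x ^ 2 = x + c) (n : ℕ) :
    x ^ (n + 2) = x ^ (n + 1) + c * x ^ n := by
  linear_combination x ^ n * h

lemma pow_add_one_sub_pow_add_two {x c : R} (h : x ^ 2 = x + c) (n : ℕ) :
    x ^ (n + 2) + (1 - x) ^ (n + 2) =
      x ^ (n + 1) + (1 - x) ^ (n + 1) + c * (x ^ n + (1 - x) ^ n) := by
  have h' : (1 - x) ^ 2 = (1 - x) + c := by linear_combination h
  rw [pow_add_two_of_sq_eq_add h, pow_add_two_of_sq_eq_add h']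
  ring

namespace PowerSeries

variable {G : R⟦X⟧}

lemma coeff_pow_add_one_sub_pow_of_lt (hG : G ^ 2 = G + X) {n j : ℕ} (hj : n < 2 * j) :
    coeff j (G ^ n + (1 - G) ^ n) = 0 := by
  induction n using Nat.twoStepInduction generalizing j with
  | zero | one => simp [coeff_one, show j ≠ 0 by omega]
  | more n ih₀ ih₁ =>
    obtain ⟨i, rfl⟩ : ∃ i, j = i + 1 := ⟨j - 1, by omega⟩
    rw [pow_add_one_sub_pow_add_two hG, map_add, coeff_succ_X_mul, ih₁ (by omega),
      ih₀ (by omega), add_zero]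

lemma coeff_pow_two_mul_add_one_sub_pow (hG : G ^ 2 = G + X) (k : ℕ) :
    coeff k (G ^ (2 * k) + (1 - G) ^ (2 * k)) = 2 := by
  induction k with
  | zero =>
    rw [mul_zero, pow_zero, pow_zero, one_add_one_eq_two, coeff_zero_eq_constantCoeff, map_ofNat]
  | succ k ih =>
    rw [show 2 * (k + 1) = 2 * k + 2 by ring, pow_add_one_sub_pow_add_two hG, map_add,
      coeff_succ_X_mul, ih, coeff_pow_add_one_sub_pow_of_lt hG (by omega), zero_add]

lemma coeff_pow_eq_zero_of_constantCoeff_eq_zero {F : R⟦X⟧} (hF : constantCoeff F = 0)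
    {n m : ℕ} (hm : m < n) : coeff m (F ^ n) = 0 := by
  have hX : X ^ n ∣ F ^ n := pow_dvd_pow_of_dvd (X_dvd_iff.mpr hF) n
  exact (X_pow_dvd_iff.mp hX) m hm

end PowerSeries

/-- For `G` the power series with `G² = G + X` and constant term `1`, for every `k ≥ 1`
the coefficient of `X^k` in `G^(2k)` equals `2`. -/
theorem stmt_3 (G : PowerSeries ℚ) (hG : G ^ 2 = G + PowerSeries.X)
    (hG1 : PowerSeries.constantCoeff G = 1) (k : ℕ) (hk : 1 ≤ k) :
    PowerSeries.coeff k (G ^ (2 * k)) = 2 := by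
  have hconj : coeff k ((1 - G) ^ (2 * k)) = 0 :=
    coeff_pow_eq_zero_of_constantCoeff_eq_zero (by simp [hG1]) (by omega)
  simpa [hconj] using coeff_pow_two_mul_add_one_sub_pow hG k
end

section
/- Define the exponential generating function F(X,Y) = exp(Σ_{κ≥1} ((−1)^{κ+1}/κ)·C(2κ−1,κ)·X^κ·Y) as a formal power series in X with polynomial coefficients in Y. Then F(X,Y) = ((1+√(1+4X))/2)^Y in the sense that for each fixed nonnegative integer value of Y = m, F(X,m) = G(X)^m where G(X) = (1+√(1+4X))/2. -/
/-!
Write `G = (1 + S)/2`, so that `G² = G + X` and `G(0) = 1`. Differentiating gives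
`(2G - 1) G' = 1`, while `(2G - 1)² = 1 + 4X`; hence `G' = (1 + 4X)^(-1/2) = Σ (-1)ⁿ C(2n,n) Xⁿ`.
Since `C(2n,n) = 2 C(2n-1,n)`, the same series is `1 - 2X A'`, and comparing the two yields
`A' G = G'`, i.e. `A = log G`. Then `exp(mA)` and `G^m` both solve `f' = m A' f` with `f(0) = 1`,
and that linear differential equation has only one such solution.
-/

open scoped Nat

/-- The formal exponential of a power series `B` with zero constant term: the coefficient
of `Xⁿ` in `exp B = Σ_j B^j/j!` only involves `j ≤ n` since `ord B^j ≥ j`. -/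
noncomputable def formalExp (B : PowerSeries ℚ) : PowerSeries ℚ :=
  PowerSeries.mk fun n =>
    ∑ j ∈ Finset.range (n + 1), PowerSeries.coeff (R := ℚ) n (B ^ j) / (j ! : ℚ)

open PowerSeries

theorem formalExp_eq_subst_exp {B : ℚ⟦X⟧} (hB : constantCoeff B = 0) :
    formalExp B = (exp ℚ).subst B := by
  ext n
  rw [coeff_subst' (HasSubst.of_constantCoeff_zero' hB), formalExp, coeff_mk,
    finsum_eq_sum_of_support_subset _ (s := Finset.range (n + 1)) ?_]
  · refine Finset.sum_congr rfl fun j _ => ?_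
    simp [div_eq_inv_mul]
  · intro j hj
    rw [Function.mem_support] at hj
    rw [Finset.coe_range, Set.mem_Iio, Nat.lt_succ_iff]
    by_contra! h
    have hlt : (n : ℕ∞) < (B ^ j).order :=
      (Nat.cast_lt.mpr h).trans_le (le_order_pow_of_constantCoeff_eq_zero j hB)
    exact hj (by rw [coeff_of_lt_order n hlt, smul_zero])

theorem constantCoeff_formalExp (B : ℚ⟦X⟧) : constantCoeff (formalExp B) = 1 := by
  rw [← coeff_zero_eq_constantCoeff_apply, formalExp, coeff_mk]
  simp

theorem derivative_formalExp {B : ℚ⟦X⟧} (hB : constantCoeff B = 0) :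
    d⁄dX ℚ (formalExp B) = d⁄dX ℚ B * formalExp B := by
  rw [formalExp_eq_subst_exp hB, derivative_subst (HasSubst.of_constantCoeff_zero' hB),
    derivative_exp, mul_comm]

theorem derivative_pow_eq_mul_of_derivative_eq_mul {R : Type*} [CommSemiring R] {c f : R⟦X⟧}
    (hf : d⁄dX R f = c * f) (m : ℕ) : d⁄dX R (f ^ m) = (m * c) * f ^ m := by
  induction m with
  | zero => simp
  | succ m ih =>
    rw [pow_succ, Derivation.leibniz, ih, hf, smul_eq_mul, smul_eq_mul]
    push_cast
    ring

theorem eq_of_derivative_eq_mul {K : Type*} [Field K] [CharZero K] {c f g : K⟦X⟧}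
    (hf : d⁄dX K f = c * f) (hg : d⁄dX K g = c * g) (hg₀ : constantCoeff g ≠ 0)
    (h₀ : constantCoeff f = constantCoeff g) : f = g := by
  have hgg : g⁻¹ * g = 1 := PowerSeries.inv_mul_cancel g hg₀
  have hquot : f * g⁻¹ = 1 := by
    refine derivative.ext ?_ ?_
    · rw [Derivation.leibniz, derivative_inv', hf, hg, Derivation.map_one_eq_zero, smul_eq_mul,
        smul_eq_mul]
      linear_combination (-c * f * g⁻¹) * hgg
    · simp [h₀, hg₀]
  calc f = f * g⁻¹ * g := by rw [mul_assoc, hgg, mul_one]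
    _ = g := by rw [hquot, one_mul]

theorem Nat.centralBinom_succ_eq_two_mul_choose (n : ℕ) :
    (n + 1).centralBinom = 2 * (2 * n + 1).choose (n + 1) := by
  rw [Nat.centralBinom_eq_two_mul_choose, show 2 * (n + 1) = 2 * n + 1 + 1 by ring,
    Nat.choose_succ_succ', Nat.choose_symm_half]
  ring

section CentralBinom

variable (R : Type*) [CommRing R]

noncomputable def centralBinomSeries : R⟦X⟧ :=
  mk fun n => (-1) ^ n * (n.centralBinom : R)

variable {R}

@[simp]
theorem constantCoeff_centralBinomSeries : constantCoeff (centralBinomSeries R) = 1 := by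
  simp [← coeff_zero_eq_constantCoeff_apply, centralBinomSeries]

theorem one_add_four_X_mul_derivative_centralBinomSeries :
    (1 + 4 * X) * d⁄dX R (centralBinomSeries R) = -2 * centralBinomSeries R := by
  ext n
  rw [show (4 : R⟦X⟧) = C 4 from (map_ofNat C 4).symm, show (-2 : R⟦X⟧) = C (-2) by
    rw [map_neg, map_ofNat], add_mul, one_mul, mul_assoc, map_add, coeff_C_mul, coeff_C_mul]
  rcases n with _ | n
  · simp [centralBinomSeries, coeff_derivative, Nat.centralBinom]
  · simp only [centralBinomSeries, coeff_derivative, coeff_mk, Nat.cast_add, Nat.cast_one,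
      coeff_succ_X_mul, neg_mul]
    have h := congrArg (Nat.cast : ℕ → R) (Nat.succ_mul_centralBinom_succ (n + 1))
    push_cast at h
    linear_combination (-1 : R) ^ (n + 2) * h

theorem one_add_four_X_mul_centralBinomSeries_sq [IsAddTorsionFree R] :
    (1 + 4 * X) * centralBinomSeries R ^ 2 = 1 := by
  refine derivative.ext ?_ (by simp)
  have h4 : d⁄dX R (1 + 4 * X : R⟦X⟧) = 4 := by
    rw [show (4 : R⟦X⟧) = C 4 from (map_ofNat C 4).symm]
    simp
  rw [Derivation.leibniz, derivative_pow, h4, Derivation.map_one_eq_zero, smul_eq_mul,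
    smul_eq_mul]
  linear_combination
    (2 * centralBinomSeries R) * one_add_four_X_mul_derivative_centralBinomSeries (R := R)

end CentralBinom

section LogGolden

variable (K : Type*) [Field K]

noncomputable def logGolden : K⟦X⟧ :=
  mk fun κ => if κ = 0 then 0 else (-1) ^ (κ + 1) / κ * ((2 * κ - 1).choose κ : K)

variable {K}

@[simp]
theorem constantCoeff_logGolden : constantCoeff (logGolden K) = 0 := by
  simp [← coeff_zero_eq_constantCoeff_apply, logGolden]

variable [CharZero K]

theorem two_mul_X_mul_derivative_logGolden :
    2 * X * d⁄dX K (logGolden K) = 1 - centralBinomSeries K := by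
  ext n
  rw [show (2 : K⟦X⟧) = C 2 from (map_ofNat C 2).symm, mul_assoc, coeff_C_mul]
  rcases n with _ | n
  · simp [centralBinomSeries]
  · rw [coeff_succ_X_mul, coeff_derivative, map_sub, coeff_one, if_neg n.succ_ne_zero]
    simp only [logGolden, centralBinomSeries, coeff_mk, if_neg n.succ_ne_zero,
      Nat.centralBinom_succ_eq_two_mul_choose, show 2 * (n + 1) - 1 = 2 * n + 1 by omega]
    push_cast
    field_simp
    ring

theorem two_mul_sub_one_mul_centralBinomSeries {G : K⟦X⟧} (hG : G ^ 2 = G + X)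
    (hG₀ : constantCoeff G = 1) : (2 * G - 1) * centralBinomSeries K = 1 := by
  set u := (2 * G - 1) * centralBinomSeries K
  have hu : (u - 1) * (u + 1) = 0 := by
    linear_combination (4 * centralBinomSeries K ^ 2) * hG +
      one_add_four_X_mul_centralBinomSeries_sq (R := K)
  have hu₀ : constantCoeff (u + 1) ≠ 0 := by
    simp [u, hG₀, map_ofNat]
  rcases mul_eq_zero.mp hu with h | h
  · exact sub_eq_zero.mp h
  · exact absurd (congrArg constantCoeff h) (by simpa using hu₀)

theorem derivative_eq_centralBinomSeries {G : K⟦X⟧} (hG : G ^ 2 = G + X)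
    (hG₀ : constantCoeff G = 1) : d⁄dX K G = centralBinomSeries K := by
  have hG' : (2 * G - 1) * d⁄dX K G = 1 := by
    have h := congrArg (d⁄dX K) hG
    rw [derivative_pow, map_add, derivative_X] at h
    linear_combination h
  linear_combination centralBinomSeries K * hG' -
    d⁄dX K G * two_mul_sub_one_mul_centralBinomSeries hG hG₀

theorem derivative_logGolden_mul {G : K⟦X⟧} (hG : G ^ 2 = G + X)
    (hG₀ : constantCoeff G = 1) : d⁄dX K (logGolden K) * G = d⁄dX K G := by
  have h2X : (2 * X : K⟦X⟧) ≠ 0 := fun h => by simpa [map_ofNat] using congrArg (coeff 1) h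
  refine mul_left_cancel₀ h2X ?_
  rw [derivative_eq_centralBinomSeries hG hG₀]
  linear_combination G * two_mul_X_mul_derivative_logGolden (K := K) -
    G * two_mul_sub_one_mul_centralBinomSeries hG hG₀ + 2 * centralBinomSeries K * hG

end LogGolden

/-- With `G = (1+√(1+4X))/2` and `A = Σ_{κ≥1}((−1)^{κ+1}/κ)C(2κ−1,κ)X^κ = log G`, one has
`F(X,m) := exp(m·A) = G^m` for every nonnegative integer `m`. -/
theorem stmt_16 (S G A : PowerSeries ℚ) (hS : S ^ 2 = 1 + 4 * PowerSeries.X)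
    (hS1 : PowerSeries.constantCoeff (R := ℚ) S = 1)
    (hG : G = PowerSeries.C (R := ℚ) (1 / 2) * (1 + S))
    (hA : A = PowerSeries.mk fun κ : ℕ =>
        if κ = 0 then (0 : ℚ) else (-1) ^ (κ + 1) / κ * ((2 * κ - 1).choose κ : ℚ)) :
    ∀ m : ℕ, formalExp ((m : ℚ) • A) = G ^ m := by
  intro m
  replace hA : A = logGolden ℚ := hA
  have hhalf : 2 * C (1 / 2 : ℚ) = 1 := by
    rw [show (2 : ℚ⟦X⟧) = C 2 from (map_ofNat C 2).symm, ← map_mul]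
    norm_num
  have hGsq : G ^ 2 = G + X := by
    subst hG
    linear_combination C (1 / 2 : ℚ) ^ 2 * hS +
      (C (1 / 2 : ℚ) * (1 + S) + (2 * C (1 / 2 : ℚ) + 1) * X) * hhalf
  have hG₀ : constantCoeff G = 1 := by
    rw [hG, map_mul, map_add, hS1, constantCoeff_C, map_one]
    norm_num
  have hmA : (m : ℚ) • A = (m : ℚ⟦X⟧) * logGolden ℚ := by
    rw [hA, Nat.cast_smul_eq_nsmul, nsmul_eq_mul]
  refine eq_of_derivative_eq_mul (c := (m : ℚ⟦X⟧) * d⁄dX ℚ (logGolden ℚ)) ?_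
    (derivative_pow_eq_mul_of_derivative_eq_mul (derivative_logGolden_mul hGsq hG₀).symm m) ?_ ?_
  · rw [hmA, derivative_formalExp (by simp), Derivation.leibniz, Derivation.map_natCast,
      smul_zero, add_zero, smul_eq_mul]
  · simp [hG₀]
  · simp [constantCoeff_formalExp, hG₀]
end
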